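/- Consider a perturbed discrete-time stochastic control system and let k ≥ 1. Suppose there exist a barrier certificate candidate B : ℝⁿ → ℝ and constants ε ∈ [0,1] and c ≥ 0 such that: (i) B(s) ≥ 0 for all s ∈ S; (ii) B(s) ≤ ε for all s ∈ S₀; (iii) B(s) ≥ 1 for all s ∈ S_u; (iv) ∫ B(g(s,δ)) dμ(δ) − B(s) ≤ c for all s ∈ S; and (v) ∫ B(g^k(s,Δ)) dμ^⊗k(Δ) − B(s) ≤ 0 for all s ∈ S. Then for every initial state s₀ ∈ S₀, the safety probability over the infinite time horizon is bounded below: ℙ_{s₀}[ traj(s₀,ω)(t) ∉ S_u for all t ∈ ℕ ] ≥ 1 − k·B(s₀) − k(k−1)c/2. -/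

import Mathlib

/-!
For each residue `r < k`, condition (v) makes `m ↦ B (x (r + m k))` a nonnegative supermartingale,
so by Ville's inequality the probability that it ever reaches `1` is at most `𝔼 B (x r)`, and
applying (iv) `r` times gives `𝔼 B (x r) ≤ B s₀ + r c`. Every time `t` is `r + m k` with
`r = t % k`, and `B ≥ 1` on the unsafe set, so a union bound over the residues bounds the
probability of ever being unsafe by `∑_{r<k} (B s₀ + r c) = k B s₀ + k (k - 1) c / 2`.

Ville's inequality is proved by induction on the horizon: the product measure on noise sequences
splits into the first `k` noise values and an independent copy of itself (Markov property).
-/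

open MeasureTheory

/-- Trajectory of a perturbed discrete-time control system. -/
def traj {n : ℕ} (g : (Fin n → ℝ) → (Fin n → ℝ) → (Fin n → ℝ))
    (s₀ : Fin n → ℝ) (ω : ℕ → Fin n → ℝ) : ℕ → Fin n → ℝ
  | 0 => s₀
  | t + 1 => g (traj g s₀ ω t) (ω t)

/-- The `k`-step update map `g^k`: `g⁰(s) = s` and
`g^{i+1}(s,(δ₀,…,δ_i)) = g(g^i(s,(δ₀,…,δ_{i−1})), δ_i)`. -/
def iterUpd {n : ℕ} (g : (Fin n → ℝ) → (Fin n → ℝ) → (Fin n → ℝ)) :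
    (k : ℕ) → (Fin n → ℝ) → (Fin k → (Fin n → ℝ)) → (Fin n → ℝ)
  | 0, s, _ => s
  | k + 1, s, Δ => g (iterUpd g k s (fun i => Δ i.castSucc)) (Δ (Fin.last k))

open scoped ENNReal

section InfinitePi

theorem measurePreserving_sumPiEquivProdPi_symm_infinitePi {ι ι' : Type*} {X : ι ⊕ ι' → Type*}
    [∀ i, MeasurableSpace (X i)] (μ : ∀ i, Measure (X i)) [∀ i, IsProbabilityMeasure (μ i)] :
    MeasurePreserving (MeasurableEquiv.sumPiEquivProdPi X).symm
      ((Measure.infinitePi fun i => μ (.inl i)).prod (Measure.infinitePi fun i => μ (.inr i)))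
      (Measure.infinitePi μ) where
  measurable := (MeasurableEquiv.sumPiEquivProdPi X).symm.measurable
  map_eq := by
    refine Measure.eq_infinitePi μ fun s t ht => ?_
    have hpre : (MeasurableEquiv.sumPiEquivProdPi X).symm ⁻¹' Set.pi s t =
        Set.pi s.toLeft (fun i => t (.inl i)) ×ˢ Set.pi s.toRight (fun i => t (.inr i)) := by
      ext
      simp [Set.mem_pi, MeasurableEquiv.coe_sumPiEquivProdPi_symm, Equiv.sumPiEquivProdPi]
    rw [Measure.map_apply (MeasurableEquiv.measurable _)
        (.pi (Finset.countable_toSet s) fun i _ => ht i), hpre, Measure.prod_prod,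
      Measure.infinitePi_pi _ fun i _ => ht _, Measure.infinitePi_pi _ fun i _ => ht _,
      Finset.prod_sum_eq_prod_toLeft_mul_prod_toRight]

variable {E : Type*} [MeasurableSpace E] (μ : Measure E) [IsProbabilityMeasure μ]

theorem measurePreserving_splitAt_infinitePi (j : ℕ) :
    MeasurePreserving (fun ω : ℕ → E => ((fun i : Fin j => ω i), fun t => ω (j + t)))
      (Measure.infinitePi fun _ => μ)
      ((Measure.pi fun _ : Fin j => μ).prod (Measure.infinitePi fun _ => μ)) := by
  have hreindex : MeasurePreserving (MeasurableEquiv.piCongrLeft (fun _ => E) (finSumNatEquiv j))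
      (Measure.infinitePi fun _ => μ) (Measure.infinitePi fun _ => μ) :=
    ⟨by fun_prop, Measure.infinitePi_map_piCongrLeft (fun _ : ℕ => μ) (finSumNatEquiv j)⟩
  have h := (measurePreserving_sumPiEquivProdPi_symm_infinitePi fun _ : Fin j ⊕ ℕ => μ).symm.comp
    hreindex.symm
  rwa [Measure.infinitePi_eq_pi (μ := fun _ : Fin j => μ)] at h

theorem eq_infinitePi_of_forall_fin {P : Measure (ℕ → E)}
    (hP : ∀ (T : ℕ) (A : Fin T → Set E), (∀ i, MeasurableSet (A i)) →
      P {ω | ∀ i : Fin T, ω i ∈ A i} = ∏ i, μ (A i)) :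
    P = Measure.infinitePi fun _ => μ := by
  classical
  refine Measure.eq_infinitePi _ fun s t ht => ?_
  obtain ⟨T, hsT⟩ : ∃ T, s ⊆ Finset.range T :=
    ⟨s.sup id + 1, fun i hi => Finset.mem_range.2 (Nat.lt_succ_of_le (Finset.le_sup (f := id) hi))⟩
  have hbox : Set.pi s t = {ω | ∀ i : Fin T, ω i ∈ if (i : ℕ) ∈ s then t i else Set.univ} := by
    ext ω
    refine ⟨fun h i => ?_, fun h i hi => ?_⟩
    · split_ifs with hi
      exacts [h i hi, Set.mem_univ _]
    · have := h ⟨i, Finset.mem_range.1 (hsT hi)⟩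
      rwa [if_pos (Finset.mem_coe.1 hi)] at this
  rw [hbox, hP T _ fun i => by split_ifs; exacts [ht i, .univ]]
  simp only [apply_ite μ, measure_univ]
  rw [Fin.prod_univ_eq_prod_range (fun i => if i ∈ s then μ (t i) else 1), Finset.prod_ite_mem,
    Finset.inter_eq_right.2 hsT]

end InfinitePi

section Trajectory

variable {n : ℕ} {g : (Fin n → ℝ) → (Fin n → ℝ) → (Fin n → ℝ)}

theorem traj_add (s : Fin n → ℝ) (ω : ℕ → Fin n → ℝ) (j t : ℕ) :
    traj g s ω (j + t) = traj g (traj g s ω j) (fun u => ω (j + u)) t := by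
  induction t with
  | zero => rfl
  | succ t ih => exact congrArg (g · (ω (j + t))) ih

theorem traj_eq_iterUpd (s : Fin n → ℝ) (ω : ℕ → Fin n → ℝ) (j : ℕ) :
    traj g s ω j = iterUpd g j s (fun i => ω i) := by
  induction j with
  | zero => rfl
  | succ j ih => exact congrArg (g · (ω j)) ih

theorem iterUpd_mem {S W : Set (Fin n → ℝ)} (hgS : ∀ s ∈ S, ∀ δ ∈ W, g s δ ∈ S) {s : Fin n → ℝ}
    (hs : s ∈ S) : ∀ {j : ℕ} {Δ : Fin j → Fin n → ℝ}, (∀ i, Δ i ∈ W) → iterUpd g j s Δ ∈ S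
  | 0, _, _ => hs
  | j + 1, _, hΔ => hgS _ (iterUpd_mem hgS hs fun i => hΔ i.castSucc) _ (hΔ (Fin.last j))

theorem measurable_traj (hg : Measurable (Function.uncurry g)) :
    Measurable fun p : (Fin n → ℝ) × (ℕ → Fin n → ℝ) => traj g p.1 p.2 := by
  refine measurable_pi_lambda _ fun t => ?_
  induction t with
  | zero => exact measurable_fst
  | succ t ih => exact hg.comp (ih.prodMk ((measurable_pi_apply t).comp measurable_snd))

theorem measurable_iterUpd (hg : Measurable (Function.uncurry g)) :
    ∀ j, Measurable fun p : (Fin n → ℝ) × (Fin j → Fin n → ℝ) => iterUpd g j p.1 p.2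
  | 0 => measurable_fst
  | j + 1 => hg.comp <| ((measurable_iterUpd hg j).comp
      (measurable_fst.prodMk (by fun_prop))).prodMk (by fun_prop)

end Trajectory

section Noise

variable {n : ℕ} {g : (Fin n → ℝ) → (Fin n → ℝ) → (Fin n → ℝ)} {μ : Measure (Fin n → ℝ)}
  [IsProbabilityMeasure μ]

theorem ae_iterUpd_mem {S W : Set (Fin n → ℝ)} (hW : ∀ᵐ δ ∂μ, δ ∈ W)
    (hgS : ∀ s ∈ S, ∀ δ ∈ W, g s δ ∈ S) (j : ℕ) {s : Fin n → ℝ} (hs : s ∈ S) :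
    ∀ᵐ Δ ∂(Measure.pi fun _ : Fin j => μ), iterUpd g j s Δ ∈ S := by
  have hWj : ∀ᵐ Δ ∂(Measure.pi fun _ : Fin j => μ), ∀ i, Δ i ∈ W :=
    ae_all_iff.2 fun i => (measurePreserving_eval _ i).quasiMeasurePreserving.ae hW
  exact hWj.mono fun Δ hΔ => iterUpd_mem hgS hs hΔ

/-- The Markov property of trajectories at time `j`. -/
theorem infinitePi_traj_add_mem (hg : Measurable (Function.uncurry g)) (s : Fin n → ℝ) (j : ℕ)
    {Φ : Set (ℕ → Fin n → ℝ)} (hΦ : MeasurableSet Φ) :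
    Measure.infinitePi (fun _ => μ) {ω | (fun t => traj g s ω (j + t)) ∈ Φ} =
      ∫⁻ Δ, Measure.infinitePi (fun _ => μ) {ω | traj g (iterUpd g j s Δ) ω ∈ Φ}
        ∂(Measure.pi fun _ : Fin j => μ) := by
  set A : Set ((Fin j → Fin n → ℝ) × (ℕ → Fin n → ℝ)) := {p | traj g (iterUpd g j s p.1) p.2 ∈ Φ}
  have hA : MeasurableSet A := (measurable_traj hg).comp
    (((measurable_iterUpd hg j).comp (measurable_const.prodMk measurable_fst)).prodMk
      measurable_snd) hΦ
  have hpre : {ω | (fun t => traj g s ω (j + t)) ∈ Φ} =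
      (fun ω : ℕ → Fin n → ℝ => ((fun i : Fin j => ω i), fun t => ω (j + t))) ⁻¹' A := by
    ext ω
    change _ ∈ Φ ↔ traj g (iterUpd g j s fun i => ω i) (fun t => ω (j + t)) ∈ Φ
    rw [← traj_eq_iterUpd, funext (traj_add s ω j)]
  rw [hpre, (measurePreserving_splitAt_infinitePi μ j).measure_preimage hA.nullMeasurableSet,
    Measure.prod_apply hA]
  rfl

theorem ville_le_of_horizon (hg : Measurable (Function.uncurry g)) {V : (Fin n → ℝ) → ℝ≥0∞}
    (hV : Measurable V) {S : Set (Fin n → ℝ)} {k : ℕ}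
    (hinv : ∀ s ∈ S, ∀ᵐ Δ ∂(Measure.pi fun _ : Fin k => μ), iterUpd g k s Δ ∈ S)
    (hsuper : ∀ s ∈ S, ∫⁻ Δ, V (iterUpd g k s Δ) ∂(Measure.pi fun _ : Fin k => μ) ≤ V s)
    (M : ℕ) {s : Fin n → ℝ} (hs : s ∈ S) :
    Measure.infinitePi (fun _ => μ) {ω | ∃ m ≤ M, 1 ≤ V (traj g s ω (m * k))} ≤ V s := by
  induction M generalizing s with
  | zero =>
    by_cases h : 1 ≤ V s
    · exact prob_le_one.trans h
    · refine (measure_mono_null (t := ∅) ?_ measure_empty).trans_le zero_le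
      rintro ω ⟨m, hm, hω⟩
      obtain rfl := Nat.le_zero.1 hm
      exact h (by simpa [traj] using hω)
  | succ M ih =>
    by_cases h : 1 ≤ V s
    · exact prob_le_one.trans h
    have hΦ : MeasurableSet {x : ℕ → Fin n → ℝ | ∃ m ≤ M, 1 ≤ V (x (m * k))} := by
      measurability
    have hshift : {ω | ∃ m ≤ M + 1, 1 ≤ V (traj g s ω (m * k))} =
        {ω | (fun t => traj g s ω (k + t)) ∈ {x | ∃ m ≤ M, 1 ≤ V (x (m * k))}} := by
      ext ω
      constructor
      · rintro ⟨_ | m, hm, hω⟩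
        · exact absurd (by simpa [traj] using hω) h
        · exact ⟨m, by omega, by rwa [Nat.succ_mul, Nat.add_comm] at hω⟩
      · rintro ⟨m, hm, hω⟩
        exact ⟨m + 1, by omega, by rwa [Nat.succ_mul, Nat.add_comm]⟩
    rw [hshift, infinitePi_traj_add_mem hg s k hΦ]
    exact (lintegral_mono_ae ((hinv s hs).mono fun Δ hΔ => ih hΔ)).trans (hsuper s hs)

theorem ville_le (hg : Measurable (Function.uncurry g)) {V : (Fin n → ℝ) → ℝ≥0∞}
    (hV : Measurable V) {S : Set (Fin n → ℝ)} {k : ℕ}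
    (hinv : ∀ s ∈ S, ∀ᵐ Δ ∂(Measure.pi fun _ : Fin k => μ), iterUpd g k s Δ ∈ S)
    (hsuper : ∀ s ∈ S, ∫⁻ Δ, V (iterUpd g k s Δ) ∂(Measure.pi fun _ : Fin k => μ) ≤ V s)
    {s : Fin n → ℝ} (hs : s ∈ S) :
    Measure.infinitePi (fun _ => μ) {ω | ∃ m, 1 ≤ V (traj g s ω (m * k))} ≤ V s := by
  have hunion : {ω | ∃ m, 1 ≤ V (traj g s ω (m * k))} =
      ⋃ M, {ω | ∃ m ≤ M, 1 ≤ V (traj g s ω (m * k))} := by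
    ext ω
    simp only [Set.mem_ofPred_eq, Set.mem_iUnion]
    exact ⟨fun ⟨m, hm⟩ => ⟨m, m, le_rfl, hm⟩, fun ⟨_, m, _, hm⟩ => ⟨m, hm⟩⟩
  have hmono : Monotone fun M => {ω | ∃ m ≤ M, 1 ≤ V (traj g s ω (m * k))} :=
    fun _ _ hMM' _ ⟨m, hm, hω⟩ => ⟨m, hm.trans hMM', hω⟩
  rw [hunion, hmono.measure_iUnion]
  exact iSup_le fun M => ville_le_of_horizon hg hV hinv hsuper M hs

theorem infinitePi_exists_one_le_traj_add_mul_le (hg : Measurable (Function.uncurry g))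
    {V : (Fin n → ℝ) → ℝ≥0∞} (hV : Measurable V) {S : Set (Fin n → ℝ)} {k : ℕ}
    (hinv : ∀ s ∈ S, ∀ᵐ Δ ∂(Measure.pi fun _ : Fin k => μ), iterUpd g k s Δ ∈ S)
    (hsuper : ∀ s ∈ S, ∫⁻ Δ, V (iterUpd g k s Δ) ∂(Measure.pi fun _ : Fin k => μ) ≤ V s)
    (r : ℕ) {s : Fin n → ℝ} (hrS : ∀ᵐ Δ ∂(Measure.pi fun _ : Fin r => μ), iterUpd g r s Δ ∈ S) :
    Measure.infinitePi (fun _ => μ) {ω | ∃ m, 1 ≤ V (traj g s ω (r + m * k))} ≤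
      ∫⁻ Δ, V (iterUpd g r s Δ) ∂(Measure.pi fun _ : Fin r => μ) := by
  have hΦ : MeasurableSet {x : ℕ → Fin n → ℝ | ∃ m, 1 ≤ V (x (m * k))} := by
    measurability
  rw [show {ω | ∃ m, 1 ≤ V (traj g s ω (r + m * k))} =
      {ω | (fun t => traj g s ω (r + t)) ∈ {x | ∃ m, 1 ≤ V (x (m * k))}} from rfl,
    infinitePi_traj_add_mem hg s r hΦ]
  exact lintegral_mono_ae (hrS.mono fun Δ hΔ => ville_le hg hV hinv hsuper hΔ)

theorem integrable_comp_of_abs_le {α β : Type*} [MeasurableSpace α] [MeasurableSpace β]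
    {ν : Measure α} [IsFiniteMeasure ν] {B : β → ℝ} (hB : Measurable B) {C : ℝ}
    (hC : ∀ x, |B x| ≤ C) {h : α → β} (hh : Measurable h) : Integrable (fun a => B (h a)) ν :=
  .of_bound (hB.comp hh).aestronglyMeasurable C (.of_forall fun a => hC (h a))

theorem integral_iterUpd_succ (j : ℕ) (s : Fin n → ℝ) (F : (Fin n → ℝ) → ℝ) :
    ∫ Δ, F (iterUpd g (j + 1) s Δ) ∂(Measure.pi fun _ : Fin (j + 1) => μ) =
      ∫ p, F (g (iterUpd g j s p.2) p.1) ∂(μ.prod (Measure.pi fun _ : Fin j => μ)) := by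
  rw [← (measurePreserving_piFinSuccAbove (fun _ => μ) (Fin.last j)).integral_comp']
  simp [MeasurableEquiv.piFinSuccAbove_apply, Fin.insertNthEquiv, iterUpd]
  rfl

theorem integral_iterUpd_le (hg : Measurable (Function.uncurry g)) {B : (Fin n → ℝ) → ℝ}
    (hB : Measurable B) {C : ℝ} (hC : ∀ x, |B x| ≤ C) {S : Set (Fin n → ℝ)}
    (hinv : ∀ j, ∀ s ∈ S, ∀ᵐ Δ ∂(Measure.pi fun _ : Fin j => μ), iterUpd g j s Δ ∈ S) {c : ℝ}
    (hdrift : ∀ s ∈ S, ∫ δ, B (g s δ) ∂μ ≤ B s + c) (j : ℕ) {s : Fin n → ℝ} (hs : s ∈ S) :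
    ∫ Δ, B (iterUpd g j s Δ) ∂(Measure.pi fun _ : Fin j => μ) ≤ B s + j * c := by
  induction j with
  | zero => simp [iterUpd]
  | succ j ih =>
    have hint : Integrable (fun Δ => B (iterUpd g j s Δ)) (Measure.pi fun _ : Fin j => μ) :=
      integrable_comp_of_abs_le hB hC ((measurable_iterUpd hg j).comp
        (measurable_const.prodMk measurable_id))
    have hstep : Integrable (fun p => B (g (iterUpd g j s p.2) p.1))
        (μ.prod (Measure.pi fun _ : Fin j => μ)) :=
      integrable_comp_of_abs_le hB hC <| hg.comp <|
        ((measurable_iterUpd hg j).comp (measurable_const.prodMk measurable_snd)).prodMk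
          measurable_fst
    calc ∫ Δ, B (iterUpd g (j + 1) s Δ) ∂(Measure.pi fun _ : Fin (j + 1) => μ)
        = ∫ Δ, ∫ δ, B (g (iterUpd g j s Δ) δ) ∂μ ∂(Measure.pi fun _ : Fin j => μ) := by
          rw [integral_iterUpd_succ, integral_prod_symm _ hstep]
      _ ≤ ∫ Δ, (B (iterUpd g j s Δ) + c) ∂(Measure.pi fun _ : Fin j => μ) :=
          integral_mono_ae hstep.integral_prod_right (hint.add (integrable_const c))
            ((hinv j s hs).mono fun Δ hΔ => hdrift _ hΔ)
      _ = ∫ Δ, B (iterUpd g j s Δ) ∂(Measure.pi fun _ : Fin j => μ) + c := by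
          rw [integral_add hint (integrable_const c)]
          simp
      _ ≤ B s + (j + 1 : ℕ) * c := by
          push_cast
          linarith

theorem infinitePi_real_exists_one_le_traj_le (hg : Measurable (Function.uncurry g))
    {B : (Fin n → ℝ) → ℝ} (hB : Measurable B) {C : ℝ} (hC : ∀ x, |B x| ≤ C)
    {S : Set (Fin n → ℝ)}
    (hinv : ∀ j, ∀ s ∈ S, ∀ᵐ Δ ∂(Measure.pi fun _ : Fin j => μ), iterUpd g j s Δ ∈ S)
    (hnonneg : ∀ s ∈ S, 0 ≤ B s) {k : ℕ} (hk : 0 < k)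
    (hsuper : ∀ s ∈ S, ∫ Δ, B (iterUpd g k s Δ) ∂(Measure.pi fun _ : Fin k => μ) ≤ B s)
    {s : Fin n → ℝ} (hs : s ∈ S) :
    (Measure.infinitePi fun _ => μ).real {ω | ∃ t, 1 ≤ B (traj g s ω t)} ≤
      ∑ r ∈ Finset.range k, ∫ Δ, B (iterUpd g r s Δ) ∂(Measure.pi fun _ : Fin r => μ) := by
  have hpos : ∀ j, ∀ s ∈ S, 0 ≤ᵐ[Measure.pi fun _ : Fin j => μ] fun Δ => B (iterUpd g j s Δ) :=
    fun j s hs => (hinv j s hs).mono fun _ hΔ => hnonneg _ hΔ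
  have hofReal : ∀ j, ∀ s ∈ S, ∫⁻ Δ, ENNReal.ofReal (B (iterUpd g j s Δ))
      ∂(Measure.pi fun _ : Fin j => μ) =
        ENNReal.ofReal (∫ Δ, B (iterUpd g j s Δ) ∂(Measure.pi fun _ : Fin j => μ)) :=
    fun j s hs => (ofReal_integral_eq_lintegral_ofReal (integrable_comp_of_abs_le hB hC
      ((measurable_iterUpd hg j).comp (measurable_const.prodMk measurable_id))) (hpos j s hs)).symm
  have hresidue : ∀ r, Measure.infinitePi (fun _ => μ) {ω | ∃ m, 1 ≤ B (traj g s ω (r + m * k))}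
      ≤ ENNReal.ofReal (∫ Δ, B (iterUpd g r s Δ) ∂(Measure.pi fun _ : Fin r => μ)) := fun r => by
    simpa only [ENNReal.one_le_ofReal, hofReal r s hs] using
      infinitePi_exists_one_le_traj_add_mul_le hg hB.ennreal_ofReal (hinv k)
        (fun s hs => (hofReal k s hs).trans_le (ENNReal.ofReal_le_ofReal (hsuper s hs))) r
        (hinv r s hs)
  have hcover : {ω | ∃ t, 1 ≤ B (traj g s ω t)} ⊆
      ⋃ r ∈ Finset.range k, {ω | ∃ m, 1 ≤ B (traj g s ω (r + m * k))} := by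
    rintro ω ⟨t, ht⟩
    exact Set.mem_biUnion (Finset.mem_range.2 (Nat.mod_lt t hk)) ⟨t / k, by rwa [Nat.mod_add_div']⟩
  calc _ ≤ ∑ r ∈ Finset.range k,
        (Measure.infinitePi fun _ => μ).real {ω | ∃ m, 1 ≤ B (traj g s ω (r + m * k))} :=
      (measureReal_mono hcover (measure_ne_top _ _)).trans (measureReal_biUnion_finset_le _ _)
    _ ≤ _ := Finset.sum_le_sum fun r _ =>
      ENNReal.toReal_le_of_le_ofReal (integral_nonneg_of_ae (hpos r s hs)) (hresidue r)

end Noise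

theorem sum_range_add_mul (K : ℕ) (a c : ℝ) :
    ∑ r ∈ Finset.range K, (a + r * c) = K * a + K * (K - 1) / 2 * c := by
  induction K with
  | zero => simp
  | succ K ih =>
    rw [Finset.sum_range_succ, ih]
    push_cast
    ring

theorem k_inductive_lower_bound_infinite_horizon_safety_general
    {n : ℕ} (S S₀ Su W : Set (Fin n → ℝ))
    (g : (Fin n → ℝ) → (Fin n → ℝ) → (Fin n → ℝ))
    (μ : Measure (Fin n → ℝ)) [IsProbabilityMeasure μ]
    (hS₀S : S₀ ⊆ S)
    (hg : Measurable (Function.uncurry g))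
    -- `W` is the support of the noise distribution `μ`
    (hW : W = {δ | ∀ U : Set (Fin n → ℝ), IsOpen U → δ ∈ U → 0 < μ U})
    (hgS : ∀ s ∈ S, ∀ δ ∈ W, g s δ ∈ S)
    -- `P` is the countable product measure `μ^⊗ℕ` on noise sequences,
    -- characterized by its values on finite cylinders
    (P : Measure (ℕ → Fin n → ℝ))
    (hP : ∀ (T : ℕ) (A : Fin T → Set (Fin n → ℝ)), (∀ i, MeasurableSet (A i)) →
      P {ω | ∀ i : Fin T, ω (i : ℕ) ∈ A i} = ∏ i, μ (A i))
    -- the barrier certificate candidate: a bounded Borel-measurable function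
    (B : (Fin n → ℝ) → ℝ) (hBmeas : Measurable B) (hBbdd : ∃ C, ∀ s, |B s| ≤ C)
    (k : ℕ) (hk : 1 ≤ k) (c : ℝ)
    (hnonneg : ∀ s ∈ S, 0 ≤ B s)
    (hunsafe : ∀ s ∈ Su, 1 ≤ B s)
    (hcmart : ∀ s ∈ S, ∫ δ, B (g s δ) ∂μ - B s ≤ c)
    (hkmart : ∀ s ∈ S,
      (∫ Δ, B (iterUpd g k s Δ) ∂(Measure.pi fun _ : Fin k => μ)) - B s ≤ 0) :
    ∀ s₀ ∈ S₀,
      1 - k * B s₀ - k * (k - 1 : ℝ) * c / 2 ≤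
        (P {ω | ∀ t : ℕ, traj g s₀ ω t ∉ Su}).toReal := by
  intro s₀ hs₀
  obtain ⟨C, hC⟩ := hBbdd
  obtain rfl := eq_infinitePi_of_forall_fin μ hP
  have hWae : ∀ᵐ δ ∂μ, δ ∈ W := by
    filter_upwards [μ.support_mem_ae] with δ hδ
    rw [Measure.support_eq_forall_isOpen] at hδ
    exact hW ▸ fun U hU hδU => hδ U hδU hU
  have hinv := fun j s (hs : s ∈ S) => ae_iterUpd_mem (μ := μ) hWae hgS j hs
  have hdrift := fun r => integral_iterUpd_le hg hBmeas hC hinv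
    (fun s hs => by linarith [hcmart s hs]) r (hS₀S hs₀)
  have hhit := infinitePi_real_exists_one_le_traj_le hg hBmeas hC hinv hnonneg hk
    (fun s hs => by linarith [hkmart s hs]) (hS₀S hs₀)
  have hmeas : MeasurableSet {ω | ∃ t, 1 ≤ B (traj g s₀ ω t)} := by
    have htraj : Measurable fun ω => traj g s₀ ω :=
      (measurable_traj hg).comp (measurable_const.prodMk measurable_id)
    measurability
  have hsafe : {ω | ∃ t, 1 ≤ B (traj g s₀ ω t)}ᶜ ⊆ {ω | ∀ t, traj g s₀ ω t ∉ Su} :=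
    fun ω hω t ht => hω ⟨t, hunsafe _ ht⟩
  calc 1 - k * B s₀ - k * (k - 1 : ℝ) * c / 2
      = 1 - ∑ r ∈ Finset.range k, (B s₀ + r * c) := by rw [sum_range_add_mul]; ring
    _ ≤ 1 - (Measure.infinitePi fun _ => μ).real {ω | ∃ t, 1 ≤ B (traj g s₀ ω t)} := by
      linarith [Finset.sum_le_sum fun r (_ : r ∈ Finset.range k) => hdrift r]
    _ = (Measure.infinitePi fun _ => μ).real {ω | ∃ t, 1 ≤ B (traj g s₀ ω t)}ᶜ :=
      (probReal_compl_eq_one_sub hmeas).symm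
    _ ≤ _ := measureReal_mono hsafe

/-- `k`-inductive lower bound on probabilistic safety over the infinite time horizon. -/
theorem k_inductive_lower_bound_infinite_horizon_safety
    {n : ℕ} (S S₀ Su W : Set (Fin n → ℝ))
    (g : (Fin n → ℝ) → (Fin n → ℝ) → (Fin n → ℝ))
    (μ : Measure (Fin n → ℝ)) [IsProbabilityMeasure μ]
    (hS : MeasurableSet S) (hS₀ : MeasurableSet S₀) (hSu : MeasurableSet Su)
    (hS₀S : S₀ ⊆ S) (hSuS : Su ⊆ S) (hdisj : S₀ ∩ Su = ∅)
    (hg : Measurable (Function.uncurry g))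
    -- `W` is the support of the noise distribution `μ`
    (hW : W = {δ | ∀ U : Set (Fin n → ℝ), IsOpen U → δ ∈ U → 0 < μ U})
    (hgS : ∀ s ∈ S, ∀ δ ∈ W, g s δ ∈ S)
    -- `P` is the countable product measure `μ^⊗ℕ` on noise sequences,
    -- characterized by its values on finite cylinders
    (P : Measure (ℕ → Fin n → ℝ)) [IsProbabilityMeasure P]
    (hP : ∀ (T : ℕ) (A : Fin T → Set (Fin n → ℝ)), (∀ i, MeasurableSet (A i)) →
      P {ω | ∀ i : Fin T, ω (i : ℕ) ∈ A i} = ∏ i, μ (A i))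
    -- the barrier certificate candidate: a bounded Borel-measurable function
    (B : (Fin n → ℝ) → ℝ) (hBmeas : Measurable B) (hBbdd : ∃ C, ∀ s, |B s| ≤ C)
    (k : ℕ) (hk : 1 ≤ k) (ε c : ℝ) (hε : ε ∈ Set.Icc (0 : ℝ) 1) (hc : 0 ≤ c)
    (hnonneg : ∀ s ∈ S, 0 ≤ B s)
    (hinit : ∀ s ∈ S₀, B s ≤ ε)
    (hunsafe : ∀ s ∈ Su, 1 ≤ B s)
    (hcmart : ∀ s ∈ S, ∫ δ, B (g s δ) ∂μ - B s ≤ c)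
    (hkmart : ∀ s ∈ S,
      (∫ Δ, B (iterUpd g k s Δ) ∂(Measure.pi fun _ : Fin k => μ)) - B s ≤ 0) :
    ∀ s₀ ∈ S₀,
      1 - k * B s₀ - k * (k - 1 : ℝ) * c / 2 ≤
        (P {ω | ∀ t : ℕ, traj g s₀ ω t ∉ Su}).toReal :=
  k_inductive_lower_bound_infinite_horizon_safety_general S S₀ Su W g μ hS₀S hg hW hgS P hP B hBmeas
    hBbdd k hk c hnonneg hunsafe hcmart hkmart
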